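/- arXiv:1910.06891 — 2 statements merged into one kernel-verified Lean document; each statement's English description precedes it below -/
import Mathlib

section
/- Let 0 < p ≤ 1 and let n be a positive integer. Let J_n be the n×n identity matrix. Then ‖J_n‖_{ℓ∞⊗_pℓ∞} = n^{(1−p)/p}. -/
open scoped BigOperators

/-- The sup norm of a vector/sequence of complex numbers. -/
noncomputable def supNorm {ι : Type*} (x : ι → ℂ) : ℝ := ⨆ i, ‖x i‖

/-- The set of values `(∑ₙ ‖xₙ‖_∞^p ‖yₙ‖_∞^p)^(1/p)` over all representations
`M j k = ∑ₙ xₙ(j) yₙ(k)` of the matrix `M` as a sum of rank-one matrices with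
bounded rows/columns.  `M` lies in `ℓ∞ ⊗_p ℓ∞` iff this set is nonempty, and
`‖M‖_{ℓ∞⊗_pℓ∞}` is its infimum. -/
noncomputable def tensorReprVals {ι : Type*} (p : ℝ) (M : ι → ι → ℂ) : Set ℝ :=
  {c | ∃ x y : ℕ → ι → ℂ,
    (∀ n, BddAbove (Set.range fun i => ‖x n i‖)) ∧
    (∀ n, BddAbove (Set.range fun i => ‖y n i‖)) ∧
    Summable (fun n => supNorm (x n) ^ p * supNorm (y n) ^ p) ∧
    (∀ i j, HasSum (fun n => x n i * y n j) (M i j)) ∧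
    c = (∑' n, supNorm (x n) ^ p * supNorm (y n) ^ p) ^ (1 / p)}

/-!
For the upper bound, the discrete Fourier decomposition `δᵢⱼ = n⁻¹ ∑ₖ ζ^{ik} ζ^{-jk}` (with `ζ` a
primitive `n`-th root of unity) writes `J_n` as `n` rank-one terms with `‖xₖ‖_∞ ‖yₖ‖_∞ = 1/n`.

For the lower bound, put `tₖ = n ‖xₖ‖_∞ ‖yₖ‖_∞`, which dominates `‖xₖ‖₂ ‖ȳₖ‖₂`. Only finitely many
`tₖ` are `≥ 1`; let `W` be the orthogonal complement of the span of the corresponding `ȳₖ`, so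
`dim W ≥ n - #{k | 1 ≤ tₖ}`. Compressing `J_n = ∑ₖ xₖ ȳₖ*` to `W` and taking traces gives
`dim W ≤ ∑_{tₖ < 1} tₖ`. As `tₖ ≤ tₖ^p` when `tₖ < 1` and `1 ≤ tₖ^p` otherwise,
`n ≤ ∑ₖ tₖ^p = n^p ∑ₖ ‖xₖ‖_∞^p ‖yₖ‖_∞^p`.
-/

open Finset Module InnerProductSpace

section SupNorm

variable {ι : Type*}

lemma supNorm_nonneg (x : ι → ℂ) : 0 ≤ supNorm x :=
  Real.iSup_nonneg fun _ => norm_nonneg _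

lemma norm_le_supNorm {x : ι → ℂ} (hx : BddAbove (Set.range fun i => ‖x i‖)) (i : ι) :
    ‖x i‖ ≤ supNorm x :=
  le_ciSup hx i

lemma supNorm_zero : supNorm (0 : ι → ℂ) = 0 := by
  simp [supNorm]

lemma supNorm_of_norm_eq [Nonempty ι] {x : ι → ℂ} {r : ℝ} (hx : ∀ i, ‖x i‖ = r) :
    supNorm x = r := by
  simp [supNorm, hx]

end SupNorm

lemma mem_tensorReprVals_of_finset {ι : Type*} [Finite ι] {p : ℝ} (hp : 0 < p)
    {M : ι → ι → ℂ} {x y : ℕ → ι → ℂ} (s : Finset ℕ) (hx : ∀ k ∉ s, x k = 0)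
    (hM : ∀ i j, ∑ k ∈ s, x k i * y k j = M i j) :
    (∑ k ∈ s, supNorm (x k) ^ p * supNorm (y k) ^ p) ^ (1 / p) ∈ tensorReprVals p M := by
  have hterm : ∀ k ∉ s, supNorm (x k) ^ p * supNorm (y k) ^ p = 0 := fun k hk => by
    rw [hx k hk, supNorm_zero, Real.zero_rpow hp.ne', zero_mul]
  refine ⟨x, y, fun k => (Set.finite_range _).bddAbove, fun k => (Set.finite_range _).bddAbove,
    summable_of_ne_finset_zero hterm, fun i j => ?_, by rw [tsum_eq_sum hterm]⟩
  rw [← hM]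
  exact hasSum_sum_of_ne_finset_zero fun k hk => by simp [hx k hk]

theorem IsPrimitiveRoot.sum_pow_mul_inv_pow {K : Type*} [Field K] {ζ : K} {n : ℕ}
    (hζ : IsPrimitiveRoot ζ n) {i j : ℕ} (hi : i < n) (hj : j < n) :
    ∑ k ∈ range n, ζ ^ (i * k) * ζ⁻¹ ^ (j * k) = if i = j then (n : K) else 0 := by
  have hζ0 : ζ ≠ 0 := hζ.ne_zero (by omega)
  have hterm : ∀ k, ζ ^ (i * k) * ζ⁻¹ ^ (j * k) = (ζ ^ i / ζ ^ j) ^ k := fun k => by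
    rw [div_eq_mul_inv, mul_pow, pow_mul, pow_mul, inv_pow]
  simp only [hterm]
  split_ifs with hij
  · simp [hij, hζ0]
  · have hw1 : ζ ^ i / ζ ^ j ≠ 1 := fun h =>
      hij (hζ.pow_inj hi hj (div_eq_one_iff_eq (pow_ne_zero _ hζ0) |>.mp h))
    rw [geom_sum_eq hw1, div_pow, ← pow_mul, ← pow_mul, mul_comm i, mul_comm j, pow_mul,
      pow_mul, hζ.pow_eq_one]
    simp

theorem rpow_mem_tensorReprVals_one {p : ℝ} (hp : 0 < p) {n : ℕ} (hn : 0 < n) :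
    (n : ℝ) ^ ((1 - p) / p) ∈ tensorReprVals p fun i j : Fin n => if i = j then (1 : ℂ) else 0 := by
  have : Nonempty (Fin n) := Fin.pos_iff_nonempty.mp hn
  have hnR : (0 : ℝ) < n := Nat.cast_pos.mpr hn
  set ζ : ℂ := Complex.exp (2 * Real.pi * Complex.I / n)
  have hζ : IsPrimitiveRoot ζ n := Complex.isPrimitiveRoot_exp n hn.ne'
  have hζ1 : ‖ζ‖ = 1 := hζ.norm'_eq_one hn.ne'
  let x : ℕ → Fin n → ℂ := fun k i => if k < n then ζ ^ ((i : ℕ) * k) / n else 0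
  let y : ℕ → Fin n → ℂ := fun k j => ζ⁻¹ ^ ((j : ℕ) * k)
  have hx : ∀ k ∈ range n, supNorm (x k) = (n : ℝ)⁻¹ := fun k hk =>
    supNorm_of_norm_eq fun i => by simp [x, mem_range.mp hk, hζ1]
  have hy : ∀ k, supNorm (y k) = 1 := fun k => supNorm_of_norm_eq fun j => by simp [y, hζ1]
  convert mem_tensorReprVals_of_finset hp (range n) (x := x) (y := y)
    (fun k hk => funext fun i => if_neg (by simpa using hk)) fun i j => ?_ using 1
  · have hexp : (n : ℝ) ^ ((1 - p) / p) = ((n : ℝ) ^ (1 - p)) ^ (1 / p) := by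
      rw [← Real.rpow_mul hnR.le, mul_one_div]
    rw [sum_congr rfl fun k hk => by rw [hx k hk, hy k], sum_const, card_range, nsmul_eq_mul,
      Real.one_rpow, mul_one, hexp, Real.rpow_sub hnR, Real.rpow_one, Real.inv_rpow hnR.le,
      div_eq_mul_inv]
  · have hterm : ∀ k ∈ range n, x k i * y k j = ζ ^ ((i : ℕ) * k) * ζ⁻¹ ^ ((j : ℕ) * k) / n :=
      fun k hk => by simp only [x, y, if_pos (mem_range.mp hk), div_mul_eq_mul_div]
    rw [sum_congr rfl hterm, ← sum_div, hζ.sum_pow_mul_inv_pow i.isLt j.isLt]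
    simp [Fin.val_inj, apply_ite (· / (n : ℂ)), hn.ne']

section TraceBound

variable {𝕜 E : Type*} [RCLike 𝕜] [NormedAddCommGroup E] [InnerProductSpace 𝕜 E]
  [FiniteDimensional 𝕜 E]

theorem hasSum_inner_orthogonalProjectionOnto {X Y : ℕ → E}
    (hXY : ∀ v, HasSum (fun k => ⟪v, X k⟫_𝕜 * ⟪Y k, v⟫_𝕜) ⟪v, v⟫_𝕜) (W : Submodule 𝕜 E) :
    HasSum (fun k => ⟪W.orthogonalProjectionOnto (Y k), W.orthogonalProjectionOnto (X k)⟫_𝕜)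
      (finrank 𝕜 W) := by
  let b := stdOrthonormalBasis 𝕜 W
  have hb : ∀ j, HasSum (fun k => ⟪Y k, (b j : E)⟫_𝕜 * ⟪(b j : E), X k⟫_𝕜) 1 := fun j => by
    have hbj : ‖(b j : E)‖ = 1 := b.orthonormal.1 j
    simpa [mul_comm, hbj] using hXY (b j)
  convert hasSum_sum fun j (_ : j ∈ univ) => hb j using 1
  · ext k
    rw [← b.sum_inner_mul_inner]
    simp
  · simp

theorem finrank_le_tsum_of_hasSum_inner_mul_inner {X Y : ℕ → E}
    (hXY : ∀ v, HasSum (fun k => ⟪v, X k⟫_𝕜 * ⟪Y k, v⟫_𝕜) ⟪v, v⟫_𝕜) {f : ℕ → ℝ}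
    (hf : Summable f) (hXYf : ∀ k, f k < 1 → ‖X k‖ * ‖Y k‖ ≤ f k) :
    (finrank 𝕜 E : ℝ) ≤ ∑' k, f k := by
  classical
  let B : Finset ℕ :=
    (Filter.eventually_cofinite.mp (hf.tendsto_cofinite_zero.eventually_lt_const one_pos)).toFinset
  have hB : ∀ k, k ∈ B ↔ 1 ≤ f k := fun k => by simp [B]
  let K := Submodule.span 𝕜 ((B.image Y : Finset E) : Set E)
  let P := Kᗮ.orthogonalProjectionOnto
  let g k := ⟪P (Y k), P (X k)⟫_𝕜
  have hg : HasSum g (finrank 𝕜 Kᗮ) := hasSum_inner_orthogonalProjectionOnto hXY Kᗮ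
  have hgB : ∀ k ∈ B, g k = 0 := fun k hk => by
    have hYk : Y k ∈ K := Submodule.subset_span (mem_coe.mpr (mem_image_of_mem Y hk))
    simp only [g, P, Submodule.orthogonalProjectionOnto_eq_zero_iff.mpr
      (K.le_orthogonal_orthogonal hYk), inner_zero_left]
  have hg_le : ∀ k, ‖g k‖ + (if k ∈ B then 1 else 0) ≤ f k := fun k => by
    by_cases hk : k ∈ B
    · simpa [hgB k hk, hk] using (hB k).mp hk
    · calc ‖g k‖ + (if k ∈ B then 1 else 0) = ‖g k‖ := by simp [hk]
        _ ≤ ‖P (Y k)‖ * ‖P (X k)‖ := norm_inner_le_norm _ _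
        _ ≤ ‖Y k‖ * ‖X k‖ := by
          gcongr <;> exact Kᗮ.norm_orthogonalProjectionOnto_apply_le _
        _ ≤ f k := by rw [mul_comm]; exact hXYf k (by simpa [hB] using hk)
  have hg_summable : Summable fun k => ‖g k‖ :=
    hf.of_nonneg_of_le (fun _ => norm_nonneg _) fun k => by
      have := hg_le k; split_ifs at this <;> linarith
  have hB_summable : Summable fun k => if k ∈ B then (1 : ℝ) else 0 :=
    summable_of_ne_finset_zero fun k hk => if_neg hk
  have hrank : finrank 𝕜 E ≤ B.card + finrank 𝕜 Kᗮ := by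
    have := K.finrank_add_finrank_orthogonal
    have : finrank 𝕜 K ≤ B.card :=
      (finrank_span_finset_le_card (R := 𝕜) (B.image Y)).trans card_image_le
    omega
  calc (finrank 𝕜 E : ℝ) ≤ B.card + finrank 𝕜 Kᗮ := by exact_mod_cast hrank
    _ = B.card + ‖∑' k, g k‖ := by rw [hg.tsum_eq]; simp
    _ ≤ ∑' k, ‖g k‖ + B.card := by linarith [norm_tsum_le_tsum_norm hg_summable]
    _ = ∑' k, (‖g k‖ + if k ∈ B then 1 else 0) := by
      rw [hg_summable.tsum_add hB_summable, tsum_eq_sum (s := B) fun k hk => if_neg hk]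
      simp
    _ ≤ ∑' k, f k := (hg_summable.add hB_summable).tsum_le_tsum hg_le hf

end TraceBound

lemma EuclideanSpace.norm_toLp_le_sqrt_card_mul {ι : Type*} [Fintype ι] {x : ι → ℂ} {c : ℝ}
    (hc : 0 ≤ c) (hx : ∀ i, ‖x i‖ ≤ c) : ‖WithLp.toLp 2 x‖ ≤ √(Fintype.card ι) * c := by
  rw [EuclideanSpace.norm_eq, ← Real.sqrt_sq hc, ← Real.sqrt_mul (Nat.cast_nonneg _)]
  gcongr
  calc ∑ i, ‖x i‖ ^ 2 ≤ ∑ _i : ι, c ^ 2 := sum_le_sum fun i _ => by gcongr; exact hx i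
    _ = Fintype.card ι * c ^ 2 := by simp

theorem hasSum_inner_mul_inner_of_hasSum_eq_ite {ι : Type*} [Fintype ι] [DecidableEq ι]
    {x y : ℕ → ι → ℂ} (hxy : ∀ i j, HasSum (fun k => x k i * y k j) (if i = j then 1 else 0))
    (v : EuclideanSpace ℂ ι) :
    HasSum (fun k => ⟪v, WithLp.toLp 2 (x k)⟫_ℂ * ⟪WithLp.toLp 2 (star (y k)), v⟫_ℂ)
      ⟪v, v⟫_ℂ := by
  have hterm : ∀ k, ⟪v, WithLp.toLp 2 (x k)⟫_ℂ * ⟪WithLp.toLp 2 (star (y k)), v⟫_ℂ =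
      ∑ i, ∑ j, star (v i) * v j * (x k i * y k j) := fun k => by
    simp only [PiLp.inner_apply, RCLike.inner_apply, sum_mul_sum]
    refine sum_congr rfl fun i _ => sum_congr rfl fun j _ => ?_
    simp
    ring
  have hv : ⟪v, v⟫_ℂ = ∑ i, ∑ j, star (v i) * v j * (if i = j then 1 else 0) := by
    rw [PiLp.inner_apply]
    simp [mul_comm, Complex.mul_conj']
  rw [funext hterm, hv]
  exact hasSum_sum fun i _ => hasSum_sum fun j _ => (hxy i j).mul_left (star (v i) * v j)

theorem card_rpow_le_of_mem_tensorReprVals_one {ι : Type*} [Fintype ι] [DecidableEq ι]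
    [Nonempty ι] {p c : ℝ} (hp0 : 0 < p) (hp1 : p ≤ 1)
    (hc : c ∈ tensorReprVals p fun i j : ι => if i = j then (1 : ℂ) else 0) :
    (Fintype.card ι : ℝ) ^ ((1 - p) / p) ≤ c := by
  obtain ⟨x, y, hx, hy, hsum, hxy, rfl⟩ := hc
  set n : ℝ := (Fintype.card ι : ℝ)
  have hn : 0 < n := Nat.cast_pos.mpr Fintype.card_pos
  set t : ℕ → ℝ := fun k => n * (supNorm (x k) * supNorm (y k))
  have ht0 : ∀ k, 0 ≤ t k := fun k =>
    mul_nonneg hn.le (mul_nonneg (supNorm_nonneg _) (supNorm_nonneg _))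
  have ht : ∀ k, t k ^ p = n ^ p * (supNorm (x k) ^ p * supNorm (y k) ^ p) := fun k => by
    rw [Real.mul_rpow hn.le (mul_nonneg (supNorm_nonneg _) (supNorm_nonneg _)),
      Real.mul_rpow (supNorm_nonneg _) (supNorm_nonneg _)]
  have hnorm : ∀ k, ‖WithLp.toLp 2 (x k)‖ * ‖WithLp.toLp 2 (star (y k))‖ ≤ t k := fun k => by
    calc _ ≤ (√n * supNorm (x k)) * (√n * supNorm (y k)) :=
          mul_le_mul
            (EuclideanSpace.norm_toLp_le_sqrt_card_mul (supNorm_nonneg _) (norm_le_supNorm (hx k)))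
            (EuclideanSpace.norm_toLp_le_sqrt_card_mul (supNorm_nonneg _)
              fun j => by simpa using norm_le_supNorm (hy k) j)
            (norm_nonneg _) (mul_nonneg (Real.sqrt_nonneg _) (supNorm_nonneg _))
      _ = t k := by rw [mul_mul_mul_comm, Real.mul_self_sqrt hn.le]
  have hXY := hasSum_inner_mul_inner_of_hasSum_eq_ite hxy
  have hf : Summable fun k => t k ^ p := by simpa only [ht] using hsum.mul_left (n ^ p)
  have hrank := finrank_le_tsum_of_hasSum_inner_mul_inner hXY hf fun k htk =>
      (hnorm k).trans (Real.self_le_rpow_of_le_one (ht0 k)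
        (not_lt.mp fun h => htk.not_ge (Real.one_le_rpow h.le hp0.le)) hp1)
  rw [finrank_euclideanSpace] at hrank
  simp only [ht, tsum_mul_left] at hrank
  calc n ^ ((1 - p) / p) = (n ^ (1 - p)) ^ (1 / p) := by rw [← Real.rpow_mul hn.le, mul_one_div]
    _ = (n / n ^ p) ^ (1 / p) := by rw [Real.rpow_sub hn, Real.rpow_one]
    _ ≤ _ := by
      gcongr
      exact (div_le_iff₀' (Real.rpow_pos_of_pos hn p)).mpr hrank

/-- For `0 < p ≤ 1`, the `n × n` identity matrix `J_n` satisfies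
`‖J_n‖_{ℓ∞⊗_pℓ∞} = n^{(1-p)/p}`. -/
theorem stmt3 (p : ℝ) (hp0 : 0 < p) (hp1 : p ≤ 1) (n : ℕ) (hn : 0 < n) :
    (tensorReprVals p fun i j : Fin n => if i = j then (1 : ℂ) else 0).Nonempty ∧
      sInf (tensorReprVals p fun i j : Fin n => if i = j then (1 : ℂ) else 0) =
        (n : ℝ) ^ ((1 - p) / p) := by
  have : Nonempty (Fin n) := Fin.pos_iff_nonempty.mp hn
  have hleast : IsLeast (tensorReprVals p fun i j : Fin n => if i = j then (1 : ℂ) else 0)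
      ((n : ℝ) ^ ((1 - p) / p)) :=
    ⟨rpow_mem_tensorReprVals_one hp0 hn, fun c hc => by
      simpa using card_rpow_le_of_mem_tensorReprVals_one hp0 hp1 hc⟩
  exact ⟨hleast.nonempty, hleast.csInf_eq⟩
end

section
/- Let 0 < p < 1 and let W = {w_{jk}}_{j,k≥0} be a matrix in 𝒲_p. Then there exist sequences α = {α_j}_{j≥0} and β = {β_k}_{k≥0} of nonnegative real numbers with ∑_j α_j^{2p/(1−p)} < ∞ and ∑_k β_k^{2p/(1−p)} < ∞ such that |w_{jk}| ≤ α_j β_k for all j,k ≥ 0 and (∑_j α_j^{2p/(1−p)})^{(1−p)/(2p)} · (∑_k β_k^{2p/(1−p)})^{(1−p)/(2p)} = ‖W‖_{𝒲_p}. -/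
/-!
A factorization `W = X Yᵗ` gives the row norms `α_j = ‖X_j‖_{2p}`, `β_k = ‖Y_k‖_{2p}`. As
`2p < 2`, the `ℓ^{2p}` norm dominates the `ℓ^2` norm, so Cauchy–Schwarz gives
`|w_{jk}| ≤ α_j β_k`, while `‖α‖_{2p♯} ‖β‖_{2p♯} = ‖X‖_{Ξ_p} ‖Y‖_{Ξ_p}`. Along a minimizing
sequence of factorizations, rescale `(α, β) ↦ (tα, t⁻¹β)` so that `‖α‖_{2p♯} = 1`: the
coordinates are then uniformly bounded, a subsequence converges pointwise (Tychonoff), and by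
Fatou's lemma the limit pair still dominates `W` with `‖α‖_{2p♯} ‖β‖_{2p♯} ≤ ‖W‖_{𝒲_p}`.
Multiplying `α` by a factor `≥ 1` turns this into equality; for `W = 0` point masses do.
-/

open scoped BigOperators

/-- The `Ξ_p = ℓ^{2p♯}(ℓ^{2p})` norm of a matrix,
`‖X‖_{Ξ_p} = (∑_j (∑_k |x_{jk}|^{2p})^{1/(1-p)})^{(1-p)/(2p)}`. -/
noncomputable def xiNorm (p : ℝ) (X : ℕ → ℕ → ℂ) : ℝ :=
  (∑' j, (∑' k, ‖X j k‖ ^ (2 * p)) ^ (1 / (1 - p))) ^ ((1 - p) / (2 * p))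

/-- `X` has finite `Ξ_p`-norm: all the sums defining `xiNorm` converge. -/
def HasXiNorm (p : ℝ) (X : ℕ → ℕ → ℂ) : Prop :=
  (∀ j, Summable fun k => ‖X j k‖ ^ (2 * p)) ∧
    Summable fun j => (∑' k, ‖X j k‖ ^ (2 * p)) ^ (1 / (1 - p))

/-- The set of values `‖X‖_{Ξ_p} ‖Y‖_{Ξ_p}` over all factorizations `W = X Yᵗ`,
i.e. `w_{jk} = ∑_l x_{jl} y_{kl}`, with `X, Y` of finite `Ξ_p`-norm.
`W ∈ 𝒲_p` iff this set is nonempty, and `‖W‖_{𝒲_p}` is its infimum. -/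
noncomputable def wReprVals (p : ℝ) (W : ℕ → ℕ → ℂ) : Set ℝ :=
  {c | ∃ X Y : ℕ → ℕ → ℂ, HasXiNorm p X ∧ HasXiNorm p Y ∧
    (∀ j k, HasSum (fun l => X j l * Y k l) (W j k)) ∧
    c = xiNorm p X * xiNorm p Y}

open Filter Topology

noncomputable def seqLpNorm (r : ℝ) (α : ℕ → ℝ) : ℝ :=
  (∑' j, α j ^ r) ^ r⁻¹

section SeqLpNorm

variable {r : ℝ} {α : ℕ → ℝ}

lemma seqLpNorm_nonneg (hα : ∀ j, 0 ≤ α j) : 0 ≤ seqLpNorm r α :=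
  Real.rpow_nonneg (tsum_nonneg fun j => Real.rpow_nonneg (hα j) r) _

lemma seqLpNorm_le_iff (hr : 0 < r) (hα : ∀ j, 0 ≤ α j) {C : ℝ} (hC : 0 ≤ C) :
    seqLpNorm r α ≤ C ↔ ∑' j, α j ^ r ≤ C ^ r :=
  Real.rpow_inv_le_iff_of_pos (tsum_nonneg fun j => Real.rpow_nonneg (hα j) r) hC hr

lemma le_seqLpNorm (hr : 0 < r) (hα : ∀ j, 0 ≤ α j) (hs : Summable fun j => α j ^ r) (j : ℕ) :
    α j ≤ seqLpNorm r α :=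
  (Real.le_rpow_inv_iff_of_pos (hα j) (tsum_nonneg fun i => Real.rpow_nonneg (hα i) r) hr).2
    (hs.le_tsum j fun i _ => Real.rpow_nonneg (hα i) r)

lemma seqLpNorm_pos (hr : 0 < r) (hα : ∀ j, 0 ≤ α j) (hs : Summable fun j => α j ^ r) {j : ℕ}
    (hj : 0 < α j) : 0 < seqLpNorm r α :=
  hj.trans_le (le_seqLpNorm hr hα hs j)

lemma summable_const_mul_rpow (hα : ∀ j, 0 ≤ α j) (hs : Summable fun j => α j ^ r) {t : ℝ}
    (ht : 0 ≤ t) : Summable fun j => (t * α j) ^ r := by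
  simpa only [Real.mul_rpow ht (hα _)] using hs.mul_left (t ^ r)

lemma seqLpNorm_const_mul (hr : 0 < r) (hα : ∀ j, 0 ≤ α j) {t : ℝ} (ht : 0 ≤ t) :
    seqLpNorm r (fun j => t * α j) = t * seqLpNorm r α := by
  simp only [seqLpNorm, Real.mul_rpow ht (hα _), tsum_mul_left]
  rw [Real.mul_rpow (Real.rpow_nonneg ht r) (tsum_nonneg fun j => Real.rpow_nonneg (hα j) r),
    Real.rpow_rpow_inv ht hr.ne']

lemma hasSum_single_rpow (hr : r ≠ 0) (i : ℕ) (a : ℝ) :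
    HasSum (fun j => Pi.single i a j ^ r) (a ^ r) := by
  have h : (fun j => Pi.single i a j ^ r) = Pi.single i (a ^ r) :=
    funext (Pi.apply_single (fun _ x => x ^ r) (fun _ => Real.zero_rpow hr) i a)
  rw [h]
  exact hasSum_pi_single i (a ^ r)

lemma seqLpNorm_single (hr : r ≠ 0) (i : ℕ) {a : ℝ} (ha : 0 ≤ a) :
    seqLpNorm r (Pi.single i a) = a := by
  rw [seqLpNorm, (hasSum_single_rpow hr i a).tsum_eq, Real.rpow_rpow_inv ha hr]

lemma summable_rpow_and_seqLpNorm_le_of_le {s : ℝ} (hr : 0 < r) (hrs : r ≤ s)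
    (hα : ∀ j, 0 ≤ α j) (hsum : Summable fun j => α j ^ r) :
    (Summable fun j => α j ^ s) ∧ seqLpNorm s α ≤ seqLpNorm r α := by
  set N := seqLpNorm r α
  have hN : 0 ≤ N := seqLpNorm_nonneg hα
  have hNr : N ^ r = ∑' j, α j ^ r :=
    Real.rpow_inv_rpow (tsum_nonneg fun j => Real.rpow_nonneg (hα j) r) hr.ne'
  have hterm : ∀ j, α j ^ s ≤ α j ^ r * N ^ (s - r) := fun j => by
    rw [← add_sub_cancel r s, Real.rpow_add' (hα j) (by linarith), add_sub_cancel_left]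
    exact mul_le_mul_of_nonneg_left
      (Real.rpow_le_rpow (hα j) (le_seqLpNorm hr hα hsum j) (by linarith))
      (Real.rpow_nonneg (hα j) r)
  have hsum_s : Summable fun j => α j ^ s :=
    (hsum.mul_right _).of_nonneg_of_le (fun j => Real.rpow_nonneg (hα j) s) hterm
  refine ⟨hsum_s, (seqLpNorm_le_iff (hr.trans_le hrs) hα hN).2 ?_⟩
  calc ∑' j, α j ^ s ≤ ∑' j, α j ^ r * N ^ (s - r) := hsum_s.tsum_le_tsum hterm (hsum.mul_right _)
    _ = N ^ r * N ^ (s - r) := by rw [tsum_mul_right, hNr]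
    _ = N ^ s := by rw [← Real.rpow_add' hN (by linarith), add_sub_cancel]

lemma summable_rpow_and_seqLpNorm_le_of_tendsto (hr : 0 < r) {f : ℕ → ℕ → ℝ} {C : ℕ → ℝ}
    {c : ℝ} (hf0 : ∀ n j, 0 ≤ f n j) (hfs : ∀ n, Summable fun j => f n j ^ r)
    (hfC : ∀ n, seqLpNorm r (f n) ≤ C n)
    (hf : ∀ j, Tendsto (fun n => f n j) atTop (𝓝 (α j))) (hC : Tendsto C atTop (𝓝 c)) :
    (Summable fun j => α j ^ r) ∧ seqLpNorm r α ≤ c := by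
  have hα : ∀ j, 0 ≤ α j := fun j => ge_of_tendsto' (hf j) fun n => hf0 n j
  have hC0 : ∀ n, 0 ≤ C n := fun n => (seqLpNorm_nonneg (hf0 n)).trans (hfC n)
  have hc : 0 ≤ c := ge_of_tendsto' hC hC0
  have hpartial : ∀ s : Finset ℕ, ∑ j ∈ s, α j ^ r ≤ c ^ r := fun s => by
    refine le_of_tendsto_of_tendsto'
      (tendsto_finsetSum s fun j _ => (hf j).rpow_const (Or.inr hr.le))
      (hC.rpow_const (Or.inr hr.le)) fun n => ?_
    exact ((hfs n).sum_le_tsum s fun j _ => Real.rpow_nonneg (hf0 n j) r).trans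
      ((seqLpNorm_le_iff hr (hf0 n) (hC0 n)).1 (hfC n))
  have hsum : Summable fun j => α j ^ r :=
    summable_of_sum_le (fun j => Real.rpow_nonneg (hα j) r) hpartial
  exact ⟨hsum, (seqLpNorm_le_iff hr hα hc).2 (hsum.tsum_le_of_sum_le hpartial)⟩

end SeqLpNorm

lemma exists_subseq_tendsto_of_mem_Icc {ι : Type*} [Countable ι] {f : ℕ → ι → ℝ} {a b : ℝ}
    (hf : ∀ n i, f n i ∈ Set.Icc a b) :
    ∃ (g : ι → ℝ) (φ : ℕ → ℕ), StrictMono φ ∧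
      ∀ i, Tendsto (fun n => f (φ n) i) atTop (𝓝 (g i)) := by
  obtain ⟨g, -, φ, hφ, hlim⟩ := (isCompact_univ_pi fun _ => isCompact_Icc).tendsto_subseq
    fun n => Set.mem_univ_pi.2 (hf n)
  exact ⟨g, φ, hφ, tendsto_pi_nhds.1 hlim⟩

structure IsDominatingPair {E : Type*} [Norm E] (r : ℝ) (W : ℕ → ℕ → E) (α β : ℕ → ℝ) :
    Prop where
  nonneg_left : ∀ j, 0 ≤ α j
  nonneg_right : ∀ k, 0 ≤ β k
  summable_left : Summable fun j => α j ^ r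
  summable_right : Summable fun k => β k ^ r
  norm_le : ∀ j k, ‖W j k‖ ≤ α j * β k

section DominatingPair

variable {E : Type*} [NormedAddCommGroup E] {r : ℝ} {W : ℕ → ℕ → E}

namespace IsDominatingPair

variable {α β : ℕ → ℝ}

lemma seqLpNorm_pos_left (h : IsDominatingPair r W α β) (hr : 0 < r) {j k : ℕ}
    (hW : W j k ≠ 0) : 0 < seqLpNorm r α :=
  seqLpNorm_pos hr h.nonneg_left h.summable_left
    (pos_of_mul_pos_left ((norm_pos_iff.2 hW).trans_le (h.norm_le j k)) (h.nonneg_right k))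

lemma seqLpNorm_pos_right (h : IsDominatingPair r W α β) (hr : 0 < r) {j k : ℕ}
    (hW : W j k ≠ 0) : 0 < seqLpNorm r β :=
  seqLpNorm_pos hr h.nonneg_right h.summable_right
    (pos_of_mul_pos_right ((norm_pos_iff.2 hW).trans_le (h.norm_le j k)) (h.nonneg_left j))

lemma const_mul (h : IsDominatingPair r W α β) {s t : ℝ} (hs : 0 ≤ s) (ht : 0 ≤ t)
    (hst : 1 ≤ s * t) : IsDominatingPair r W (fun j => s * α j) (fun k => t * β k) where
  nonneg_left j := mul_nonneg hs (h.nonneg_left j)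
  nonneg_right k := mul_nonneg ht (h.nonneg_right k)
  summable_left := summable_const_mul_rpow h.nonneg_left h.summable_left hs
  summable_right := summable_const_mul_rpow h.nonneg_right h.summable_right ht
  norm_le j k := calc
    ‖W j k‖ ≤ α j * β k := h.norm_le j k
    _ ≤ (s * t) * (α j * β k) :=
      le_mul_of_one_le_left (mul_nonneg (h.nonneg_left j) (h.nonneg_right k)) hst
    _ = s * α j * (t * β k) := by ring

lemma exists_seqLpNorm_left_eq_one (h : IsDominatingPair r W α β) (hr : 0 < r) {j k : ℕ}
    (hW : W j k ≠ 0) :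
    ∃ α' β', IsDominatingPair r W α' β' ∧ seqLpNorm r α' = 1 ∧
      seqLpNorm r β' = seqLpNorm r α * seqLpNorm r β := by
  have hα := h.seqLpNorm_pos_left hr hW
  refine ⟨_, _, h.const_mul (inv_nonneg.2 hα.le) hα.le (inv_mul_cancel₀ hα.ne').ge, ?_, ?_⟩
  · rw [seqLpNorm_const_mul hr h.nonneg_left (inv_nonneg.2 hα.le), inv_mul_cancel₀ hα.ne']
  · rw [seqLpNorm_const_mul hr h.nonneg_right hα.le]

lemma exists_seqLpNorm_mul_eq (h : IsDominatingPair r W α β) (hr : 0 < r) {j k : ℕ}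
    (hW : W j k ≠ 0) {c : ℝ} (hc : seqLpNorm r α * seqLpNorm r β ≤ c) :
    ∃ α' β', IsDominatingPair r W α' β' ∧ seqLpNorm r α' * seqLpNorm r β' = c := by
  have hN := mul_pos (h.seqLpNorm_pos_left hr hW) (h.seqLpNorm_pos_right hr hW)
  have ht : 1 ≤ c / (seqLpNorm r α * seqLpNorm r β) := (one_le_div hN).2 hc
  refine ⟨_, _, h.const_mul (zero_le_one.trans ht) zero_le_one (by rwa [mul_one]), ?_⟩
  rw [seqLpNorm_const_mul hr h.nonneg_left (zero_le_one.trans ht),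
    seqLpNorm_const_mul hr h.nonneg_right zero_le_one, one_mul, mul_assoc,
    div_mul_cancel₀ _ hN.ne']

end IsDominatingPair

lemma exists_isDominatingPair_of_eq_zero (hr : r ≠ 0) (hW : ∀ j k, W j k = 0) {c : ℝ} (hc : 0 ≤ c) :
    ∃ α β, IsDominatingPair r W α β ∧ seqLpNorm r α * seqLpNorm r β = c := by
  refine ⟨Pi.single 0 c, Pi.single 0 1, ⟨?_, ?_, (hasSum_single_rpow hr 0 c).summable,
    (hasSum_single_rpow hr 0 1).summable, ?_⟩, ?_⟩
  · exact fun j => by by_cases hj : j = 0 <;> simp [hj, hc]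
  · exact fun k => by by_cases hk : k = 0 <;> simp [hk]
  · exact fun j k => by
      rw [hW, norm_zero]
      by_cases hj : j = 0 <;> by_cases hk : k = 0 <;> simp [hj, hk, hc]
  · rw [seqLpNorm_single hr 0 hc, seqLpNorm_single hr 0 zero_le_one, mul_one]

lemma exists_isDominatingPair_mul_le_of_tendsto (hr : 0 < r) {α β : ℕ → ℕ → ℝ} {C : ℕ → ℝ} {c : ℝ}
    (h : ∀ n, IsDominatingPair r W (α n) (β n)) (hα : ∀ n, seqLpNorm r (α n) ≤ 1)
    (hβ : ∀ n, seqLpNorm r (β n) ≤ C n) (hC : Tendsto C atTop (𝓝 c)) :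
    ∃ α' β', IsDominatingPair r W α' β' ∧ seqLpNorm r α' * seqLpNorm r β' ≤ c := by
  obtain ⟨M, hM⟩ := hC.bddAbove_range
  have hbound : ∀ n i, Sum.elim (α n) (β n) i ∈ Set.Icc 0 (max 1 M) := by
    rintro n (j | k)
    · exact ⟨(h n).nonneg_left j, (le_seqLpNorm hr (h n).nonneg_left (h n).summable_left j).trans
        ((hα n).trans (le_max_left _ _))⟩
    · exact ⟨(h n).nonneg_right k,
        (le_seqLpNorm hr (h n).nonneg_right (h n).summable_right k).trans
          ((hβ n).trans ((hM ⟨n, rfl⟩).trans (le_max_right _ _)))⟩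
  obtain ⟨g, φ, hφ, hg⟩ := exists_subseq_tendsto_of_mem_Icc hbound
  obtain ⟨hαs, hαle⟩ := summable_rpow_and_seqLpNorm_le_of_tendsto hr
    (fun n => (h (φ n)).nonneg_left) (fun n => (h (φ n)).summable_left) (fun n => hα (φ n))
    (fun j => hg (Sum.inl j)) tendsto_const_nhds
  obtain ⟨hβs, hβle⟩ := summable_rpow_and_seqLpNorm_le_of_tendsto hr
    (fun n => (h (φ n)).nonneg_right) (fun n => (h (φ n)).summable_right) (fun n => hβ (φ n))
    (fun k => hg (Sum.inr k)) (hC.comp hφ.tendsto_atTop)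
  have hα0 : ∀ j, 0 ≤ g (Sum.inl j) := fun j =>
    ge_of_tendsto' (hg (Sum.inl j)) fun n => (h (φ n)).nonneg_left j
  have hβ0 : ∀ k, 0 ≤ g (Sum.inr k) := fun k =>
    ge_of_tendsto' (hg (Sum.inr k)) fun n => (h (φ n)).nonneg_right k
  refine ⟨fun j => g (Sum.inl j), fun k => g (Sum.inr k), ⟨hα0, hβ0, hαs, hβs, fun j k => ?_⟩,
    (mul_le_of_le_one_left (seqLpNorm_nonneg hβ0) hαle).trans hβle⟩
  exact ge_of_tendsto' ((hg (Sum.inl j)).mul (hg (Sum.inr k))) fun n => (h (φ n)).norm_le j k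

end DominatingPair

lemma seqLpNorm_rpow_mul {s : ℝ} (hs : s ≠ 0) {f : ℕ → ℝ} (hf : ∀ l, 0 ≤ f l) (t : ℝ) :
    seqLpNorm s f ^ (s * t) = (∑' l, f l ^ s) ^ t := by
  rw [seqLpNorm, ← Real.rpow_mul (tsum_nonneg fun l => Real.rpow_nonneg (hf l) s),
    inv_mul_cancel_left₀ hs]

lemma norm_le_seqLpNorm_mul_of_hasSum {R : Type*} [NormedRing R] {s : ℝ} (hs0 : 0 < s)
    (hs2 : s ≤ 2) {x y : ℕ → R} {w : R} (hx : Summable fun l => ‖x l‖ ^ s)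
    (hy : Summable fun l => ‖y l‖ ^ s) (hw : HasSum (fun l => x l * y l) w) :
    ‖w‖ ≤ seqLpNorm s (fun l => ‖x l‖) * seqLpNorm s (fun l => ‖y l‖) := by
  obtain ⟨hx2, hx2le⟩ :=
    summable_rpow_and_seqLpNorm_le_of_le hs0 hs2 (fun l => norm_nonneg (x l)) hx
  obtain ⟨hy2, hy2le⟩ :=
    summable_rpow_and_seqLpNorm_le_of_le hs0 hs2 (fun l => norm_nonneg (y l)) hy
  obtain ⟨hxy, hcs⟩ := Real.summable_and_inner_le_Lp_mul_Lq_tsum_of_nonneg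
    Real.HolderConjugate.two_two (fun l => norm_nonneg (x l)) (fun l => norm_nonneg (y l)) hx2 hy2
  have hnorm : Summable fun l => ‖x l * y l‖ :=
    hxy.of_nonneg_of_le (fun l => norm_nonneg _) fun l => norm_mul_le _ _
  calc ‖w‖ ≤ ∑' l, ‖x l * y l‖ := hw.tsum_eq ▸ norm_tsum_le_tsum_norm hnorm
    _ ≤ ∑' l, ‖x l‖ * ‖y l‖ := hnorm.tsum_le_tsum (fun l => norm_mul_le _ _) hxy
    _ ≤ seqLpNorm 2 (fun l => ‖x l‖) * seqLpNorm 2 (fun l => ‖y l‖) := by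
      simpa only [seqLpNorm, one_div] using hcs
    _ ≤ _ := mul_le_mul hx2le hy2le (seqLpNorm_nonneg fun l => norm_nonneg _)
      (seqLpNorm_nonneg fun l => norm_nonneg _)

section WReprVals

variable {p : ℝ} {W : ℕ → ℕ → ℂ}

lemma exists_isDominatingPair_of_mem_wReprVals (hp0 : 0 < p) (hp1 : p < 1) {c : ℝ}
    (hc : c ∈ wReprVals p W) :
    ∃ α β, IsDominatingPair (2 * p / (1 - p)) W α β ∧
      seqLpNorm (2 * p / (1 - p)) α * seqLpNorm (2 * p / (1 - p)) β = c := by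
  obtain ⟨X, Y, hX, hY, hXY, rfl⟩ := hc
  have hrow : ∀ (Z : ℕ → ℕ → ℂ) j, seqLpNorm (2 * p) (fun l => ‖Z j l‖) ^ (2 * p / (1 - p)) =
      (∑' l, ‖Z j l‖ ^ (2 * p)) ^ (1 / (1 - p)) := fun Z j => by
    rw [← mul_one_div]
    exact seqLpNorm_rpow_mul (by positivity) (fun l => norm_nonneg _) _
  have hxi : ∀ Z : ℕ → ℕ → ℂ,
      seqLpNorm (2 * p / (1 - p)) (fun j => seqLpNorm (2 * p) (fun l => ‖Z j l‖)) = xiNorm p Z :=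
    fun Z => by rw [seqLpNorm, tsum_congr (hrow Z), inv_div]; rfl
  refine ⟨_, _, ⟨fun j => seqLpNorm_nonneg fun l => norm_nonneg _,
    fun k => seqLpNorm_nonneg fun l => norm_nonneg _, by simpa only [hrow] using hX.2,
    by simpa only [hrow] using hY.2, fun j k => norm_le_seqLpNorm_mul_of_hasSum (by positivity)
      (by linarith) (hX.1 j) (hY.1 k) (hXY j k)⟩, by rw [hxi, hxi]⟩

lemma nonneg_of_mem_wReprVals (hp0 : 0 < p) (hp1 : p < 1) {c : ℝ} (hc : c ∈ wReprVals p W) :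
    0 ≤ c := by
  obtain ⟨α, β, h, rfl⟩ := exists_isDominatingPair_of_mem_wReprVals hp0 hp1 hc
  exact mul_nonneg (seqLpNorm_nonneg h.nonneg_left) (seqLpNorm_nonneg h.nonneg_right)

lemma exists_isDominatingPair_mul_le_sInf (hp0 : 0 < p) (hp1 : p < 1)
    (hW : (wReprVals p W).Nonempty) {j k : ℕ} (hjk : W j k ≠ 0) :
    ∃ α β, IsDominatingPair (2 * p / (1 - p)) W α β ∧
      seqLpNorm (2 * p / (1 - p)) α * seqLpNorm (2 * p / (1 - p)) β ≤ sInf (wReprVals p W) := by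
  have hr : 0 < 2 * p / (1 - p) := div_pos (by linarith) (by linarith)
  obtain ⟨c, -, hlim, hmem⟩ :=
    exists_seq_tendsto_sInf hW ⟨0, fun _ hc => nonneg_of_mem_wReprVals hp0 hp1 hc⟩
  choose α β h hnorm using fun n => exists_isDominatingPair_of_mem_wReprVals hp0 hp1 (hmem n)
  choose α' β' h' hα' hβ' using fun n => (h n).exists_seqLpNorm_left_eq_one hr hjk
  exact exists_isDominatingPair_mul_le_of_tendsto hr h' (fun n => (hα' n).le)
    (fun n => ((hβ' n).trans (hnorm n)).le) hlim

end WReprVals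

/-- Theorem 6.5: for `0 < p < 1` and `W ∈ 𝒲_p` there are nonnegative sequences
`α, β ∈ ℓ^{2p/(1-p)}` with `|w_{jk}| ≤ α_j β_k` and
`‖α‖_{ℓ^{2p♯}} ‖β‖_{ℓ^{2p♯}} = ‖W‖_{𝒲_p}`. -/
theorem stmt14 (p : ℝ) (hp0 : 0 < p) (hp1 : p < 1)
    (W : ℕ → ℕ → ℂ) (hW : (wReprVals p W).Nonempty) :
    ∃ α β : ℕ → ℝ, (∀ j, 0 ≤ α j) ∧ (∀ k, 0 ≤ β k) ∧
      (Summable fun j => α j ^ (2 * p / (1 - p))) ∧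
      (Summable fun k => β k ^ (2 * p / (1 - p))) ∧
      (∀ j k, ‖W j k‖ ≤ α j * β k) ∧
      (∑' j, α j ^ (2 * p / (1 - p))) ^ ((1 - p) / (2 * p)) *
          (∑' k, β k ^ (2 * p / (1 - p))) ^ ((1 - p) / (2 * p)) =
        sInf (wReprVals p W) := by
  have hr : 0 < 2 * p / (1 - p) := div_pos (by linarith) (by linarith)
  obtain ⟨α, β, h, hαβ⟩ : ∃ α β, IsDominatingPair (2 * p / (1 - p)) W α β ∧
      seqLpNorm (2 * p / (1 - p)) α * seqLpNorm (2 * p / (1 - p)) β = sInf (wReprVals p W) := by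
    by_cases hW0 : ∃ j k, W j k ≠ 0
    · obtain ⟨j, k, hjk⟩ := hW0
      obtain ⟨α, β, h, hle⟩ := exists_isDominatingPair_mul_le_sInf hp0 hp1 hW hjk
      exact h.exists_seqLpNorm_mul_eq hr hjk hle
    · exact exists_isDominatingPair_of_eq_zero hr.ne' (by simpa using hW0)
        (Real.sInf_nonneg fun _ hc => nonneg_of_mem_wReprVals hp0 hp1 hc)
  refine ⟨α, β, h.nonneg_left, h.nonneg_right, h.summable_left, h.summable_right, h.norm_le, ?_⟩
  simpa only [seqLpNorm, inv_div] using hαβ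
end
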